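/- (Key variance decomposition in the RR analysis.) Let f(W) = (1/N)Σ_{i=1}^N f_i(W) with each f_i L-smooth, let H be a random orthogonal projection matrix independent of the permutation, let W^t be fixed, let π be a uniformly random permutation of {1, …, N}, and let W^t_0, …, W^t_{N−1} be any (permutation- and H-measurable) iterates. Set ĝ = (1/N)Σ_{i=0}^{N−1} ∇f_{π_i}(W^t_i). Then E[‖∇f(W^t) − H·ĝ‖_F²] ≤ λ_max(E[I − H])·‖∇f(W^t)‖_F² + L²·(1/N)·Σ_{i=0}^{N−1} E[‖W^t − W^t_i‖_F²]. -/

import Mathlib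

open Matrix MeasureTheory ProbabilityTheory

attribute [local instance] Matrix.frobeniusSeminormedAddCommGroup Matrix.frobeniusNormedAddCommGroup Matrix.frobeniusNormedSpace

/-- The product measurable structure on matrices. -/
local instance matrixMeasurableSpace {a b : ℕ} : MeasurableSpace (Matrix (Fin a) (Fin b) ℝ) :=
  inferInstanceAs (MeasurableSpace ((Fin a) → (Fin b) → ℝ))

/-- Discrete measurable structure on permutations of a finite type. -/
local instance permMeasurableSpace {N : ℕ} : MeasurableSpace (Equiv.Perm (Fin N)) := ⊤

/-- Trace (Frobenius) inner product. -/
noncomputable def tinner {p q : ℕ} (X Y : Matrix (Fin p) (Fin q) ℝ) : ℝ := (Xᵀ * Y).trace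

/-- `G` is the gradient field of `f` with respect to the trace inner product. -/
def IsGradient {p q : ℕ} (f : Matrix (Fin p) (Fin q) ℝ → ℝ)
    (G : Matrix (Fin p) (Fin q) ℝ → Matrix (Fin p) (Fin q) ℝ) : Prop :=
  Differentiable ℝ f ∧ ∀ W V : Matrix (Fin p) (Fin q) ℝ, fderiv ℝ f W V = tinner (G W) V

/-- Lipschitz continuity (constant `L`) of a gradient field, in Frobenius norm. -/
def LipschitzGrad {p q : ℕ} (L : ℝ)
    (G : Matrix (Fin p) (Fin q) ℝ → Matrix (Fin p) (Fin q) ℝ) : Prop :=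
  ∀ W V : Matrix (Fin p) (Fin q) ℝ, ‖G W - G V‖ ≤ L * ‖W - V‖

/-- Largest eigenvalue of a (symmetric) real matrix, as the supremum of its real spectrum. -/
noncomputable def lamMax {k : ℕ} (A : Matrix (Fin k) (Fin k) ℝ) : ℝ := sSup (spectrum ℝ A)

lemma tinner_eq_sum {p q : ℕ} (X Y : Matrix (Fin p) (Fin q) ℝ) :
    tinner X Y = ∑ j, ∑ i, X i j * Y i j := by
  simp [tinner, Matrix.trace, Matrix.mul_apply, Matrix.diag, Matrix.transpose_apply]

lemma norm_sq_eq_tinner {p q : ℕ} (X : Matrix (Fin p) (Fin q) ℝ) :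
    ‖X‖ ^ 2 = tinner X X := by
  rw [frobenius_norm_def, tinner_eq_sum]
  have hS : (0:ℝ) ≤ ∑ i, ∑ j, ‖X i j‖ ^ (2:ℝ) := by positivity
  rw [← Real.rpow_natCast (_ ^ (1/2:ℝ)) 2, ← Real.rpow_mul hS]
  norm_num
  rw [Finset.sum_comm]
  congr 1; ext j; congr 1; ext i
  ring

lemma tinner_comm {p q : ℕ} (X Y : Matrix (Fin p) (Fin q) ℝ) : tinner X Y = tinner Y X := by
  simp [tinner_eq_sum, mul_comm]

lemma tinner_add_right {p q : ℕ} (X Y Z : Matrix (Fin p) (Fin q) ℝ) :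
    tinner X (Y + Z) = tinner X Y + tinner X Z := by
  simp [tinner, Matrix.mul_add]

lemma tinner_add_left {p q : ℕ} (X Y Z : Matrix (Fin p) (Fin q) ℝ) :
    tinner (X + Y) Z = tinner X Z + tinner Y Z := by
  simp [tinner, Matrix.add_mul]

-- key algebra: for symmetric idempotent Q, tinner (Q*Y) Z = tinner Y (Q*Z)
lemma tinner_mul_left {k q : ℕ} (Q : Matrix (Fin k) (Fin k) ℝ)
    (Y Z : Matrix (Fin k) (Fin q) ℝ) :
    tinner (Q * Y) Z = tinner Y (Qᵀ * Z) := by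
  simp only [tinner, Matrix.transpose_mul, Matrix.mul_assoc]

lemma proj_tinner {k q : ℕ} {Q : Matrix (Fin k) (Fin k) ℝ} (hs : Qᵀ = Q) (hi : Q * Q = Q)
    (Y : Matrix (Fin k) (Fin q) ℝ) : ‖Q * Y‖ ^ 2 = tinner Y (Q * Y) := by
  rw [norm_sq_eq_tinner, tinner_mul_left, hs, ← Matrix.mul_assoc, hi]

lemma oneSubProj {k : ℕ} {Q : Matrix (Fin k) (Fin k) ℝ} (hs : Qᵀ = Q) (hi : Q * Q = Q) :
    ((1:Matrix (Fin k) (Fin k) ℝ) - Q)ᵀ = 1 - Q ∧ ((1:Matrix (Fin k) (Fin k) ℝ) - Q) * (1 - Q) = 1 - Q := by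
  constructor
  · rw [Matrix.transpose_sub, Matrix.transpose_one, hs]
  · rw [Matrix.sub_mul, Matrix.one_mul, Matrix.mul_sub, Matrix.mul_one, hi]
    simp

lemma decomp {k q : ℕ} {P : Matrix (Fin k) (Fin k) ℝ} (hs : Pᵀ = P) (hi : P * P = P)
    (X g : Matrix (Fin k) (Fin q) ℝ) :
    ‖X - P * g‖ ^ 2 = tinner X ((1 - P) * X) + ‖P * (X - g)‖ ^ 2 := by
  obtain ⟨hs', hi'⟩ := oneSubProj hs hi
  have hsplit : X - P * g = (1 - P) * X + P * (X - g) := by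
    rw [Matrix.sub_mul, Matrix.mul_sub, Matrix.one_mul]
    abel
  have hcross : tinner ((1 - P) * X) (P * (X - g)) = 0 := by
    rw [tinner_mul_left, hs', ← Matrix.mul_assoc]
    have : ((1:Matrix (Fin k) (Fin k) ℝ) - P) * P = 0 := by
      rw [Matrix.sub_mul, Matrix.one_mul, hi, sub_self]
    rw [this, Matrix.zero_mul]
    simp [tinner]
  rw [hsplit, norm_sq_eq_tinner, tinner_add_left, tinner_add_right, tinner_add_right,
    hcross, tinner_comm (P * (X - g)) ((1-P)*X), hcross,
    ← proj_tinner hs' hi', norm_sq_eq_tinner (P * (X - g)),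
    ← norm_sq_eq_tinner ((1-P) * X)]
  ring

lemma proj_norm_le {k q : ℕ} {P : Matrix (Fin k) (Fin k) ℝ} (hs : Pᵀ = P) (hi : P * P = P)
    (Y : Matrix (Fin k) (Fin q) ℝ) : ‖P * Y‖ ^ 2 ≤ ‖Y‖ ^ 2 := by
  obtain ⟨hs', hi'⟩ := oneSubProj hs hi
  have h2 := decomp hs hi Y 0
  simp only [Matrix.mul_zero, sub_zero] at h2
  rw [← proj_tinner hs' hi'] at h2
  nlinarith [sq_nonneg ‖((1:Matrix (Fin k) (Fin k) ℝ)-P)*Y‖]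

lemma rayleigh {k q : ℕ} {A : Matrix (Fin k) (Fin k) ℝ} (hA : A.IsHermitian)
    (X : Matrix (Fin k) (Fin q) ℝ) :
    tinner X (A * X) ≤ lamMax A * ‖X‖ ^ 2 := by
  classical
  set U : Matrix (Fin k) (Fin k) ℝ := (hA.eigenvectorUnitary : Matrix (Fin k) (Fin k) ℝ) with hU
  set D : Matrix (Fin k) (Fin k) ℝ := Matrix.diagonal hA.eigenvalues with hD
  set Y : Matrix (Fin k) (Fin q) ℝ := Uᵀ * X with hY
  have hUU : U * Uᵀ = 1 := by
    have := Matrix.mem_unitaryGroup_iff.mp (hA.eigenvectorUnitary).2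
    simpa [Matrix.star_eq_conjTranspose, Matrix.conjTranspose_eq_transpose_of_trivial] using this
  have hspec : A = U * D * Uᵀ := by
    have := hA.spectral_theorem
    simpa [hD, RCLike.ofReal_real_eq_id, Matrix.star_eq_conjTranspose,
      Matrix.conjTranspose_eq_transpose_of_trivial] using this
  have h1 : tinner X (A * X) = tinner Y (D * Y) := by
    rw [tinner, tinner, hY, Matrix.transpose_mul, Matrix.transpose_transpose, hspec]
    simp only [Matrix.mul_assoc]
  have h2 : tinner Y Y = tinner X X := by
    rw [tinner, tinner, hY, Matrix.transpose_mul, Matrix.transpose_transpose,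
      Matrix.mul_assoc Xᵀ U, ← Matrix.mul_assoc U, hUU, Matrix.one_mul]
  have h4 : ∀ i, hA.eigenvalues i ≤ lamMax A := fun i =>
    le_csSup (Matrix.finite_spectrum A).bddAbove (hA.eigenvalues_mem_spectrum_real i)
  rw [h1, norm_sq_eq_tinner, ← h2, tinner_eq_sum, tinner_eq_sum]
  have hDY : ∀ i j, (D * Y) i j = hA.eigenvalues i * Y i j := by
    intro i j; rw [hD, Matrix.diagonal_mul]
  simp only [hDY, Finset.mul_sum]
  refine Finset.sum_le_sum fun j _ => Finset.sum_le_sum fun i _ => ?_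
  have : Y i j * (hA.eigenvalues i * Y i j) = hA.eigenvalues i * (Y i j * Y i j) := by ring
  rw [this]
  exact mul_le_mul_of_nonneg_right (h4 i) (mul_self_nonneg _)

lemma tinner_smul_right {p q : ℕ} (c : ℝ) (X Y : Matrix (Fin p) (Fin q) ℝ) :
    tinner X (c • Y) = c * tinner X Y := by
  rw [tinner, tinner, Matrix.mul_smul, Matrix.trace_smul, smul_eq_mul]

/-- entry evaluation as a CLM -/
noncomputable def entryCLM {p : ℕ} (i j : Fin p) : Matrix (Fin p) (Fin p) ℝ →L[ℝ] ℝ :=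
  LinearMap.toContinuousLinearMap
    { toFun := fun M => M i j, map_add' := fun _ _ => rfl, map_smul' := fun _ _ => rfl }

lemma entryCLM_apply {p : ℕ} (i j : Fin p) (M : Matrix (Fin p) (Fin p) ℝ) :
    entryCLM i j M = M i j := rfl

/-- quadratic form CLM -/
noncomputable def quadCLM {p q : ℕ} (X : Matrix (Fin p) (Fin q) ℝ) :
    Matrix (Fin p) (Fin p) ℝ →L[ℝ] ℝ :=
  LinearMap.toContinuousLinearMap
    { toFun := fun P => tinner X (P * X)
      map_add' := fun P Q => by simp only [Matrix.add_mul, tinner_add_right]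
      map_smul' := fun c P => by
        simp only [RingHom.id_apply, Matrix.smul_mul, tinner_smul_right, smul_eq_mul] }

lemma quadCLM_apply {p q : ℕ} (X : Matrix (Fin p) (Fin q) ℝ) (P : Matrix (Fin p) (Fin p) ℝ) :
    quadCLM X P = tinner X (P * X) := rfl

/-- Key variance decomposition in the Random Reshuffling analysis of RAC-LoRA. -/
theorem stmt19 {p q N : ℕ} {Ω : Type*} [MeasurableSpace Ω] (μ : Measure Ω)
    [IsProbabilityMeasure μ]
    (fi : Fin N → Matrix (Fin p) (Fin q) ℝ → ℝ)
    (Gi : Fin N → Matrix (Fin p) (Fin q) ℝ → Matrix (Fin p) (Fin q) ℝ)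
    (f : Matrix (Fin p) (Fin q) ℝ → ℝ) (Gf : Matrix (Fin p) (Fin q) ℝ → Matrix (Fin p) (Fin q) ℝ)
    (L : ℝ) (hL : 0 < L)
    (hfdef : ∀ W, f W = (N : ℝ)⁻¹ * ∑ i, fi i W)
    (hGfdef : ∀ W, Gf W = (N : ℝ)⁻¹ • ∑ i, Gi i W)
    (hgradi : ∀ i, IsGradient (fi i) (Gi i)) (hlipi : ∀ i, LipschitzGrad L (Gi i))
    (H : Ω → Matrix (Fin p) (Fin p) ℝ) (hHmeas : Measurable H) (hHint : @Integrable _ _ SeminormedAddGroup.toContinuousENorm _ _ H μ)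
    (hproj : ∀ᵐ ω ∂μ, (H ω)ᵀ = H ω ∧ H ω * H ω = H ω)
    (π : Ω → Equiv.Perm (Fin N)) (hπmeas : Measurable π)
    (hπunif : Measure.map π μ =
      (Fintype.card (Equiv.Perm (Fin N)) : ENNReal)⁻¹ • Measure.count)
    (hindep : IndepFun H π μ)
    (Wt : Matrix (Fin p) (Fin q) ℝ) (Wit : ℕ → Ω → Matrix (Fin p) (Fin q) ℝ)
    -- the iterates are measurable functions of the randomness `(H, π)` only
    (F : ℕ → Matrix (Fin p) (Fin p) ℝ → Equiv.Perm (Fin N) → Matrix (Fin p) (Fin q) ℝ)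
    (hWitF : ∀ i ω, Wit i ω = F i (H ω) (π ω))
    (hWitmeas : ∀ i, Measurable (Wit i))
    (hWitint : ∀ i, Integrable (fun ω => ‖Wt - Wit i ω‖ ^ 2) μ) :
    (∫ ω, ‖Gf Wt -
        H ω * ((N : ℝ)⁻¹ • ∑ i : Fin N, Gi (π ω i) (Wit i ω))‖ ^ 2 ∂μ) ≤
      lamMax (∫ ω, ((1 : Matrix (Fin p) (Fin p) ℝ) - H ω) ∂μ) * ‖Gf Wt‖ ^ 2 +
        L ^ 2 * (N : ℝ)⁻¹ * ∑ i ∈ Finset.range N, ∫ ω, ‖Wt - Wit i ω‖ ^ 2 ∂μ := by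
  classical
  set X := Gf Wt with hX
  set g : Ω → Matrix (Fin p) (Fin q) ℝ :=
    fun ω => (N : ℝ)⁻¹ • ∑ i : Fin N, Gi (π ω i) (Wit i ω) with hg
  set b : Ω → ℝ := fun ω =>
    tinner X ((1 - H ω) * X) + L ^ 2 * (N : ℝ)⁻¹ * ∑ i ∈ Finset.range N, ‖Wt - Wit i ω‖ ^ 2
    with hb
  have hint1 : @Integrable _ _ SeminormedAddGroup.toContinuousENorm _ _ (fun ω => (1 : Matrix (Fin p) (Fin p) ℝ) - H ω) μ :=
    (integrable_const _).sub hHint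
  have hqint : Integrable (fun ω => tinner X ((1 - H ω) * X)) μ := by
    have := (quadCLM X).integrable_comp hint1
    exact this
  have hsumint : Integrable (fun ω => ∑ i ∈ Finset.range N, ‖Wt - Wit i ω‖ ^ 2) μ :=
    integrable_finset_sum _ fun i _ => hWitint i
  have hbint : Integrable b μ := hqint.add (hsumint.const_mul _)
  have hae : ∀ᵐ ω ∂μ, ‖X - H ω * g ω‖ ^ 2 ≤ b ω := by
    filter_upwards [hproj] with ω hω
    obtain ⟨hs, hi⟩ := hω
    rw [decomp hs hi X (g ω)]
    have h2 := proj_norm_le hs hi (X - g ω)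
    have h3 : ‖X - g ω‖ ^ 2 ≤ L ^ 2 * (N : ℝ)⁻¹ * ∑ i ∈ Finset.range N, ‖Wt - Wit i ω‖ ^ 2 := by
      have hXrw : X = (N : ℝ)⁻¹ • ∑ i : Fin N, Gi (π ω i) Wt := by
        rw [hX, hGfdef]
        congr 1
        exact (Equiv.sum_comp (π ω) (fun i => Gi i Wt)).symm
      have hdiff : X - g ω
          = (N : ℝ)⁻¹ • ∑ i : Fin N, (Gi (π ω i) Wt - Gi (π ω i) (Wit i ω)) := by
        rw [hXrw, hg, ← smul_sub, ← Finset.sum_sub_distrib]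
      rcases Nat.eq_zero_or_pos N with hN | hN
      · subst hN
        simp [hdiff]
      have hNne : ((N : ℝ)) ≠ 0 := by positivity
      have hnorm : ‖X - g ω‖ ≤ (N : ℝ)⁻¹ * ∑ i : Fin N, L * ‖Wt - Wit i ω‖ := by
        rw [hdiff, norm_smul]
        have h0 : ‖((N:ℝ)⁻¹ : ℝ)‖ = (N:ℝ)⁻¹ := by
          rw [Real.norm_eq_abs, abs_of_nonneg (by positivity)]
        rw [h0]
        refine mul_le_mul_of_nonneg_left ?_ (by positivity)
        refine (norm_sum_le _ _).trans (Finset.sum_le_sum fun i _ => ?_)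
        exact hlipi (π ω i) Wt (Wit (i:ℕ) ω)
      have hsq : ‖X - g ω‖ ^ 2 ≤ ((N : ℝ)⁻¹ * ∑ i : Fin N, L * ‖Wt - Wit i ω‖) ^ 2 :=
        pow_le_pow_left₀ (norm_nonneg _) hnorm 2
      refine hsq.trans ?_
      have hcs : (∑ i : Fin N, L * ‖Wt - Wit i ω‖) ^ 2
          ≤ (N : ℝ) * ∑ i : Fin N, (L * ‖Wt - Wit i ω‖) ^ 2 := by
        have := sq_sum_le_card_mul_sum_sq (s := (Finset.univ : Finset (Fin N)))
            (f := fun i => L * ‖Wt - Wit (i:ℕ) ω‖)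
        simpa using this
      have hrange : (∑ i : Fin N, ‖Wt - Wit (i:ℕ) ω‖ ^ 2)
          = ∑ i ∈ Finset.range N, ‖Wt - Wit i ω‖ ^ 2 :=
        Fin.sum_univ_eq_sum_range (fun i => ‖Wt - Wit i ω‖ ^ 2) N
      calc ((N : ℝ)⁻¹ * ∑ i : Fin N, L * ‖Wt - Wit i ω‖) ^ 2
          = ((N:ℝ)⁻¹)^2 * (∑ i : Fin N, L * ‖Wt - Wit i ω‖) ^ 2 := by ring
        _ ≤ ((N:ℝ)⁻¹)^2 * ((N : ℝ) * ∑ i : Fin N, (L * ‖Wt - Wit i ω‖) ^ 2) := by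
            exact mul_le_mul_of_nonneg_left hcs (by positivity)
        _ = L ^ 2 * (N : ℝ)⁻¹ * ∑ i : Fin N, ‖Wt - Wit (i:ℕ) ω‖ ^ 2 := by
            simp only [mul_pow, ← Finset.mul_sum]
            field_simp
        _ = L ^ 2 * (N : ℝ)⁻¹ * ∑ i ∈ Finset.range N, ‖Wt - Wit i ω‖ ^ 2 := by rw [hrange]
    have hbω : b ω = tinner X ((1 - H ω) * X)
        + L ^ 2 * (N : ℝ)⁻¹ * ∑ i ∈ Finset.range N, ‖Wt - Wit i ω‖ ^ 2 := rfl
    rw [hbω]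
    linarith
  have hmain : (∫ ω, ‖X - H ω * g ω‖ ^ 2 ∂μ) ≤ ∫ ω, b ω ∂μ :=
    integral_mono_of_nonneg (Filter.Eventually.of_forall fun ω => sq_nonneg _) hbint hae
  have hbeq : (∫ ω, b ω ∂μ)
      = tinner X ((∫ ω, ((1 : Matrix (Fin p) (Fin p) ℝ) - H ω) ∂μ) * X)
        + L ^ 2 * (N : ℝ)⁻¹ * ∑ i ∈ Finset.range N, ∫ ω, ‖Wt - Wit i ω‖ ^ 2 ∂μ := by
    rw [hb, integral_add hqint (hsumint.const_mul _)]
    congr 1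
    · have := (quadCLM X).integral_comp_comm hint1
      exact this
    · rw [integral_const_mul, integral_finset_sum _ (fun i _ => hWitint i)]
  have hentry : ∀ i j, (∫ ω, ((1 : Matrix (Fin p) (Fin p) ℝ) - H ω) ∂μ) i j
      = ∫ ω, ((1 : Matrix (Fin p) (Fin p) ℝ) - H ω) i j ∂μ := by
    intro i j
    have := (entryCLM i j).integral_comp_comm hint1
    exact this.symm
  have hAherm : (∫ ω, ((1 : Matrix (Fin p) (Fin p) ℝ) - H ω) ∂μ).IsHermitian := by
    rw [Matrix.IsHermitian]
    ext i j
    rw [Matrix.conjTranspose_apply, star_trivial, hentry j i, hentry i j]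
    apply integral_congr_ae
    filter_upwards [hproj] with ω hω
    obtain ⟨hs, _⟩ := hω
    have hsym : H ω j i = H ω i j := by
      conv_lhs => rw [← hs]
      simp [Matrix.transpose_apply]
    simp [Matrix.sub_apply, Matrix.one_apply, hsym, eq_comm]
  calc (∫ ω, ‖X - H ω * g ω‖ ^ 2 ∂μ) ≤ ∫ ω, b ω ∂μ := hmain
    _ = _ := hbeq
    _ ≤ lamMax (∫ ω, ((1 : Matrix (Fin p) (Fin p) ℝ) - H ω) ∂μ) * ‖X‖ ^ 2
        + L ^ 2 * (N : ℝ)⁻¹ * ∑ i ∈ Finset.range N, ∫ ω, ‖Wt - Wit i ω‖ ^ 2 ∂μ :=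
      add_le_add_left (rayleigh hAherm X) _
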